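/- arXiv:1506.01748 — 5 statements merged into one kernel-verified Lean document; each statement's English description precedes it below -/
import Mathlib

section
/- For every s ∈ (0,1) and every λ > 0, the integral ∫₀^∞ t^{-s-1}(e^{-λt} - 1) dt converges and equals Γ(-s)·λ^s, where Γ denotes the Gamma function (extended to negative non-integer arguments via the functional equation Γ(x+1) = x·Γ(x)). -/
open MeasureTheory Real Set Filter Topology

/-!
Since `(t ^ b * (exp (-(λ t)) - 1))' = b t ^ (b - 1) (exp (-(λ t)) - 1) - λ t ^ b exp (-(λ t))`
and, for `b = -s ∈ (-1, 0)`, the bracketed function vanishes at both `0⁺` and `∞`, integrating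
by parts gives `∫₀^∞ t ^ (-s - 1) (e^(-λ t) - 1) dt = -(λ / s) ∫₀^∞ t ^ (-s) e^(-λ t) dt
= -(λ / s) λ ^ (s - 1) Γ(1 - s)`, which is `Γ(-s) λ ^ s` by `Γ(1 - s) = -s Γ(-s)`.
-/

lemma abs_exp_neg_sub_one_le_self {x : ℝ} (hx : 0 ≤ x) : |exp (-x) - 1| ≤ x := by
  rw [abs_sub_comm, abs_of_nonneg (by simpa using hx)]
  linarith [one_sub_le_exp_neg x]

lemma abs_exp_neg_sub_one_le_one {x : ℝ} (hx : 0 ≤ x) : |exp (-x) - 1| ≤ 1 := by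
  rw [abs_sub_comm, abs_of_nonneg (by simpa using hx)]
  linarith [exp_pos (-x)]

lemma integrableOn_Ioi_of_le_rpow {f : ℝ → ℝ} {a b C D : ℝ} (hf : ContinuousOn f (Ioi 0))
    (hb : -1 < b) (ha : a < -1) (h0 : ∀ t ∈ Ioc (0 : ℝ) 1, ‖f t‖ ≤ C * t ^ b)
    (h1 : ∀ t ∈ Ioi (1 : ℝ), ‖f t‖ ≤ D * t ^ a) : IntegrableOn f (Ioi 0) := by
  rw [← Ioc_union_Ioi_eq_Ioi zero_le_one]
  refine IntegrableOn.union ?_ ?_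
  · have hmaj : IntegrableOn (fun t : ℝ => C * t ^ b) (Ioc 0 1) :=
      ((intervalIntegrable_iff_integrableOn_Ioc_of_le zero_le_one).mp
        (intervalIntegral.intervalIntegrable_rpow' hb)).const_mul C
    exact hmaj.mono' ((hf.mono Ioc_subset_Ioi_self).aestronglyMeasurable measurableSet_Ioc)
      ((ae_restrict_iff' measurableSet_Ioc).mpr (ae_of_all _ h0))
  · have hmaj : IntegrableOn (fun t : ℝ => D * t ^ a) (Ioi 1) :=
      (integrableOn_Ioi_rpow_of_lt ha one_pos).const_mul D
    exact hmaj.mono' ((hf.mono (Ioi_subset_Ioi zero_le_one)).aestronglyMeasurable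
      measurableSet_Ioi) ((ae_restrict_iff' measurableSet_Ioi).mpr (ae_of_all _ h1))

section RpowMulExpNegMulSubOne

variable {lam : ℝ}

lemma continuousOn_rpow_mul_exp_neg_mul_sub_one (a lam : ℝ) :
    ContinuousOn (fun t : ℝ => t ^ a * (exp (-(lam * t)) - 1)) (Ioi 0) :=
  (continuousOn_id.rpow_const fun _ hx => Or.inl (ne_of_gt hx)).mul (by fun_prop)

lemma abs_rpow_mul_exp_neg_mul_sub_one_le_mul_rpow_add_one (a : ℝ) (hlam : 0 ≤ lam) {t : ℝ}
    (ht : 0 < t) : |t ^ a * (exp (-(lam * t)) - 1)| ≤ lam * t ^ (a + 1) := by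
  rw [abs_mul, abs_of_pos (rpow_pos_of_pos ht a), rpow_add_one ht.ne']
  calc t ^ a * |exp (-(lam * t)) - 1| ≤ t ^ a * (lam * t) :=
        mul_le_mul_of_nonneg_left (abs_exp_neg_sub_one_le_self (by positivity)) (by positivity)
    _ = lam * (t ^ a * t) := by ring

lemma abs_rpow_mul_exp_neg_mul_sub_one_le_rpow (a : ℝ) (hlam : 0 ≤ lam) {t : ℝ} (ht : 0 < t) :
    |t ^ a * (exp (-(lam * t)) - 1)| ≤ t ^ a := by
  rw [abs_mul, abs_of_pos (rpow_pos_of_pos ht a)]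
  exact mul_le_of_le_one_right (by positivity) (abs_exp_neg_sub_one_le_one (by positivity))

lemma integrableOn_rpow_mul_exp_neg_mul_sub_one {a : ℝ} (ha₀ : -2 < a) (ha₁ : a < -1)
    (hlam : 0 ≤ lam) : IntegrableOn (fun t : ℝ => t ^ a * (exp (-(lam * t)) - 1)) (Ioi 0) :=
  integrableOn_Ioi_of_le_rpow (continuousOn_rpow_mul_exp_neg_mul_sub_one a lam)
    (by linarith : -1 < a + 1) ha₁
    (fun _ ht => abs_rpow_mul_exp_neg_mul_sub_one_le_mul_rpow_add_one a hlam ht.1)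
    (fun t ht => (abs_rpow_mul_exp_neg_mul_sub_one_le_rpow a hlam
      (zero_lt_one.trans ht)).trans_eq (one_mul _).symm)

lemma hasDerivAt_rpow_mul_exp_neg_mul_sub_one (b lam : ℝ) {x : ℝ} (hx : 0 < x) :
    HasDerivAt (fun t : ℝ => t ^ b * (exp (-(lam * t)) - 1))
      (b * (x ^ (b - 1) * (exp (-(lam * x)) - 1)) - lam * (x ^ b * exp (-(lam * x)))) x := by
  have hexp : HasDerivAt (fun t : ℝ => exp (-(lam * t)) - 1) (-lam * exp (-(lam * x))) x := by
    simpa [mul_comm] using (((hasDerivAt_id x).const_mul lam).neg.exp).sub_const 1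
  exact ((hasDerivAt_rpow_const (p := b) (Or.inl hx.ne')).mul hexp).congr_deriv (by ring)

lemma continuousWithinAt_rpow_mul_exp_neg_mul_sub_one {b : ℝ} (hb : -1 < b) (hlam : 0 ≤ lam) :
    ContinuousWithinAt (fun t : ℝ => t ^ b * (exp (-(lam * t)) - 1)) (Ici 0) 0 := by
  have hb' : b + 1 ≠ 0 := by linarith
  have hbound : Tendsto (fun t : ℝ => lam * t ^ (b + 1)) (𝓝 0) (𝓝 0) := by
    simpa [zero_rpow hb'] using
      (continuousAt_rpow_const 0 (b + 1) (Or.inr (by linarith))).tendsto.const_mul lam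
  rw [ContinuousWithinAt, show (0 : ℝ) ^ b * (exp (-(lam * 0)) - 1) = 0 by simp]
  refine squeeze_zero_norm' ?_ (hbound.mono_left nhdsWithin_le_nhds)
  filter_upwards [self_mem_nhdsWithin] with t ht
  rcases (mem_Ici.mp ht).eq_or_lt with rfl | ht
  · simp [zero_rpow hb']
  · exact abs_rpow_mul_exp_neg_mul_sub_one_le_mul_rpow_add_one b hlam ht

lemma tendsto_rpow_mul_exp_neg_mul_sub_one_atTop {b : ℝ} (hb : b < 0) (hlam : 0 ≤ lam) :
    Tendsto (fun t : ℝ => t ^ b * (exp (-(lam * t)) - 1)) atTop (𝓝 0) := by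
  have hbound : Tendsto (fun t : ℝ => t ^ b) atTop (𝓝 0) := by
    simpa using tendsto_rpow_neg_atTop (neg_pos.mpr hb)
  refine squeeze_zero_norm' ?_ hbound
  filter_upwards [eventually_gt_atTop 0] with t ht
  exact abs_rpow_mul_exp_neg_mul_sub_one_le_rpow b hlam ht

/-- Integration by parts: `t ^ b * (exp (-(lam * t)) - 1)` vanishes at `0⁺` and at `∞`. -/
lemma integral_rpow_sub_one_mul_exp_neg_mul_sub_one_Ioi {b : ℝ} (hb₀ : -1 < b) (hb₁ : b < 0)
    (hlam : 0 < lam) :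
    ∫ t in Ioi (0 : ℝ), t ^ (b - 1) * (exp (-(lam * t)) - 1) =
      lam / b * ∫ t in Ioi (0 : ℝ), t ^ b * exp (-(lam * t)) := by
  have hg := integrableOn_rpow_mul_exp_neg_mul_sub_one (a := b - 1) (by linarith) (by linarith)
    hlam.le
  have hh : IntegrableOn (fun t : ℝ => t ^ b * exp (-(lam * t))) (Ioi 0) := by
    simpa using integrableOn_rpow_mul_exp_neg_mul_rpow hb₀ one_pos hlam
  have hFTC := integral_Ioi_of_hasDerivAt_of_tendsto
    (continuousWithinAt_rpow_mul_exp_neg_mul_sub_one hb₀ hlam.le)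
    (fun x hx => hasDerivAt_rpow_mul_exp_neg_mul_sub_one b lam hx)
    ((hg.const_mul b).sub (hh.const_mul lam))
    (tendsto_rpow_mul_exp_neg_mul_sub_one_atTop hb₁ hlam.le)
  rw [integral_sub (hg.const_mul b) (hh.const_mul lam), integral_const_mul,
    integral_const_mul] at hFTC
  simp only [mul_zero, neg_zero, exp_zero, sub_self] at hFTC
  rw [div_mul_eq_mul_div, eq_div_iff hb₁.ne]
  linarith

end RpowMulExpNegMulSubOne

/-- For every `s ∈ (0,1)` and every `λ > 0`, the integral
`∫₀^∞ t^(-s-1) (e^(-λ t) - 1) dt` converges and equals `Γ(-s) · λ^s`. -/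
theorem stmt_0 (s lam : ℝ) (hs : s ∈ Set.Ioo (0 : ℝ) 1) (hlam : 0 < lam) :
    IntegrableOn (fun t : ℝ => t ^ (-s - 1) * (Real.exp (-(lam * t)) - 1))
      (Set.Ioi (0 : ℝ)) volume ∧
    ∫ t in Set.Ioi (0 : ℝ), t ^ (-s - 1) * (Real.exp (-(lam * t)) - 1) =
      Real.Gamma (-s) * lam ^ s := by
  obtain ⟨hs₀, hs₁⟩ := hs
  refine ⟨integrableOn_rpow_mul_exp_neg_mul_sub_one (by linarith) (by linarith) hlam.le, ?_⟩
  have hGamma : Gamma (1 - s) = -s * Gamma (-s) := by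
    rw [← Gamma_add_one (neg_ne_zero.mpr hs₀.ne'), neg_add_eq_sub]
  have hpow : (1 / lam) ^ (1 - s) = lam ^ s / lam := by
    rw [one_div, inv_rpow hlam.le, rpow_sub hlam, rpow_one, inv_div]
  have hGammaIntegral : ∫ t in Ioi (0 : ℝ), t ^ (-s) * exp (-(lam * t)) =
      (1 / lam) ^ (1 - s) * Gamma (1 - s) := by
    simpa using integral_rpow_mul_exp_neg_mul_Ioi (a := 1 - s) (by linarith) hlam
  rw [integral_rpow_sub_one_mul_exp_neg_mul_sub_one_Ioi (by linarith) (by linarith) hlam,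
    hGammaIntegral, hGamma, hpow]
  field_simp
end

section
/- Let f : ℝ² → ℝ be defined by f(x,y) = (e^x + e^{-x²})·y²·(2 - y²) - e^{-x²} + 1. Then f is differentiable on ℝ², and its gradient vanishes at a point (x,y) if and only if (x,y) = (0,0). -/
/-!
Write `f(x, y) = u(x) v(y) + w(x)` with `u = eˣ + e^{-x²}`, `v = y²(2 - y²)`, `w = 1 - e^{-x²}`.
Since `u > 0`, `∂_y f = u(x) · 4y(1 - y²)` vanishes only on the lines `y = 0` and `y = ±1`.
On `y = ±1` we have `v = 1`, so `∂ₓf = eˣ ≠ 0`; on `y = 0`, `∂ₓf = 2x e^{-x²}` vanishes only at `x = 0`.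
-/

open Real ContinuousLinearMap

lemma hasFDerivAt_mul_add_of_hasDerivAt {u v w : ℝ → ℝ} {u' v' w' x y : ℝ}
    (hu : HasDerivAt u u' x) (hv : HasDerivAt v v' y) (hw : HasDerivAt w w' x) :
    HasFDerivAt (fun p : ℝ × ℝ => u p.1 * v p.2 + w p.1)
      ((u' * v y + w') • fst ℝ ℝ ℝ + (u x * v') • snd ℝ ℝ ℝ) (x, y) := by
  have hfst : HasFDerivAt (Prod.fst : ℝ × ℝ → ℝ) (fst ℝ ℝ ℝ) (x, y) := hasFDerivAt_fst
  have hsnd : HasFDerivAt (Prod.snd : ℝ × ℝ → ℝ) (snd ℝ ℝ ℝ) (x, y) := hasFDerivAt_snd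
  have hu₁ := hu.comp_hasFDerivAt (x, y) hfst
  have hv₂ := hv.comp_hasFDerivAt (x, y) hsnd
  have hw₁ := hw.comp_hasFDerivAt (x, y) hfst
  refine ((hu₁.mul hv₂).add hw₁).congr_fderiv ?_
  ext <;> simp [mul_comm]

lemma smul_fst_add_smul_snd_eq_zero_iff {a b : ℝ} :
    a • fst ℝ ℝ ℝ + b • snd ℝ ℝ ℝ = 0 ↔ a = 0 ∧ b = 0 := by
  constructor
  · intro h
    exact ⟨by simpa using congr($h (1, 0)), by simpa using congr($h (0, 1))⟩
  · rintro ⟨rfl, rfl⟩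
    simp

lemma hasDerivAt_exp_neg_sq (x : ℝ) :
    HasDerivAt (fun t => exp (-t ^ 2)) (-2 * x * exp (-x ^ 2)) x := by
  refine (hasDerivAt_pow 2 x).fun_neg.exp.congr_deriv ?_
  push_cast
  ring

lemma hasDerivAt_sq_mul_two_sub_sq (y : ℝ) :
    HasDerivAt (fun t => t ^ 2 * (2 - t ^ 2)) (4 * y * (1 - y ^ 2)) y := by
  refine ((hasDerivAt_pow 2 y).fun_mul ((hasDerivAt_pow 2 y).const_sub 2)).congr_deriv ?_
  push_cast
  ring

lemma critical_point_iff (x y : ℝ) :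
    (exp x - 2 * x * exp (-x ^ 2)) * (y ^ 2 * (2 - y ^ 2)) + 2 * x * exp (-x ^ 2) = 0 ∧
      (exp x + exp (-x ^ 2)) * (4 * y * (1 - y ^ 2)) = 0 ↔ x = 0 ∧ y = 0 := by
  constructor
  · rintro ⟨hx, hy⟩
    have hy' : y = 0 ∨ y ^ 2 = 1 := by
      have : y * (1 - y ^ 2) = 0 := by
        have : exp x + exp (-x ^ 2) ≠ 0 := by positivity
        have := (mul_eq_zero.mp hy).resolve_left this
        linear_combination this / 4
      rcases mul_eq_zero.mp this with h | h
      · exact .inl h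
      · exact .inr (by linarith)
    rcases hy' with rfl | hy1
    · have : 2 * x * exp (-x ^ 2) = 0 := by simpa using hx
      simpa [exp_ne_zero] using this
    · rw [hy1] at hx
      exact absurd (by linear_combination hx) (exp_ne_zero x)
  · rintro ⟨rfl, rfl⟩
    norm_num

/-- Let `f(x,y) = (eˣ + e^(-x²)) y² (2 - y²) - e^(-x²) + 1`. Then `f` is differentiable
on `ℝ²` and its gradient vanishes at `(x,y)` if and only if `(x,y) = (0,0)`. -/
theorem stmt_1 (f : ℝ × ℝ → ℝ)
    (hf : ∀ x y : ℝ, f (x, y) =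
      (Real.exp x + Real.exp (-x ^ 2)) * y ^ 2 * (2 - y ^ 2) - Real.exp (-x ^ 2) + 1) :
    Differentiable ℝ f ∧ ∀ p : ℝ × ℝ, fderiv ℝ f p = 0 ↔ p = (0, 0) := by
  have hf_eq : f = fun p : ℝ × ℝ =>
      (exp p.1 + exp (-p.1 ^ 2)) * (p.2 ^ 2 * (2 - p.2 ^ 2)) + (1 - exp (-p.1 ^ 2)) := by
    ext ⟨x, y⟩
    rw [hf]
    ring
  have hf' : ∀ x y : ℝ, HasFDerivAt f
      (((exp x - 2 * x * exp (-x ^ 2)) * (y ^ 2 * (2 - y ^ 2)) + 2 * x * exp (-x ^ 2)) • fst ℝ ℝ ℝ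
        + ((exp x + exp (-x ^ 2)) * (4 * y * (1 - y ^ 2))) • snd ℝ ℝ ℝ) (x, y) := by
    intro x y
    rw [hf_eq]
    refine (hasFDerivAt_mul_add_of_hasDerivAt ((hasDerivAt_exp x).add (hasDerivAt_exp_neg_sq x))
      (hasDerivAt_sq_mul_two_sub_sq y) ((hasDerivAt_exp_neg_sq x).const_sub 1)).congr_fderiv ?_
    congr 2
    ring
  refine ⟨fun ⟨x, y⟩ => (hf' x y).differentiableAt, fun ⟨x, y⟩ => ?_⟩
  rw [(hf' x y).fderiv, smul_fst_add_smul_snd_eq_zero_iff, critical_point_iff, Prod.mk.injEq]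
end

section
/- Let X be a real normed vector space, E : X → ℝ continuous, and u₀, u₁ ∈ X with E(u₁) ≤ E(u₀). Let Γ be the set of continuous paths g : [0,1] → X with g(0) = u₀ and g(1) = u₁, and let c = inf_{g ∈ Γ} sup_{t ∈ [0,1]} E(g(t)). If c > E(u₀), then u₀ and u₁ lie in two distinct connected components of the set {u ∈ X : E(u) < c}. -/
/-!
The sublevel set `{E < c}` is open, so in a normed space (locally path-connected) its
connected components are path-connected. A path from `u₀` to `u₁` inside `{E < c}` would
be a competitor in `Γ` on which `E` attains its maximum, by compactness of `[0,1]`, at a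
value `< c`, contradicting `c = inf_Γ max E`.
-/

open Set

theorem IsOpen.joinedIn_of_connectedComponentIn_eq {X : Type*} [TopologicalSpace X]
    [LocallyPathConnectedSpace X] {F : Set X} (hF : IsOpen F) {x y : X} (hx : x ∈ F)
    (hy : y ∈ F) (h : connectedComponentIn F x = connectedComponentIn F y) : JoinedIn F x y := by
  have hyx : y ∈ connectedComponentIn F x := h ▸ mem_connectedComponentIn hy
  have hpath : IsPathConnected (connectedComponentIn F x) :=
    hF.connectedComponentIn.isConnected_iff_isPathConnected.mp
      (isConnected_connectedComponentIn_iff.mpr hx)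
  exact (hpath.joinedIn x (mem_connectedComponentIn hx) y hyx).mono
    (connectedComponentIn_subset F x)

section MountainPass

variable {X : Type*} [TopologicalSpace X]

def pathMaxima (E : X → ℝ) (u₀ u₁ : X) : Set ℝ :=
  { y : ℝ | ∃ g : ℝ → X, ContinuousOn g (Set.Icc 0 1) ∧
    g 0 = u₀ ∧ g 1 = u₁ ∧ y = sSup ((fun t => E (g t)) '' Set.Icc 0 1) }

theorem bddBelow_pathMaxima {E : X → ℝ} (hE : Continuous E) (u₀ u₁ : X) :
    BddBelow (pathMaxima E u₀ u₁) := by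
  refine ⟨E u₀, ?_⟩
  rintro _ ⟨g, hg, hg0, -, rfl⟩
  exact le_csSup (isCompact_Icc.bddAbove_image (hE.comp_continuousOn hg))
    ⟨0, left_mem_Icc.mpr zero_le_one, congrArg E hg0⟩

theorem sInf_pathMaxima_lt_of_joinedIn {E : X → ℝ} (hE : Continuous E) {u₀ u₁ : X} {c : ℝ}
    (h : JoinedIn {u | E u < c} u₀ u₁) : sInf (pathMaxima E u₀ u₁) < c := by
  let γ := h.somePath
  have hmax : sSup ((fun t => E (γ.extend t)) '' Icc 0 1) < c := by
    refine (isCompact_Icc.sSup_lt_iff_of_continuous ⟨0, left_mem_Icc.mpr zero_le_one⟩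
      (hE.comp γ.continuous_extend).continuousOn c).mpr fun t ht => ?_
    change E (γ.extend t) < c
    rw [γ.extend_extends' ⟨t, ht⟩]
    exact h.somePath_mem _
  exact csInf_lt_of_lt (bddBelow_pathMaxima hE u₀ u₁)
    ⟨γ.extend, γ.continuous_extend.continuousOn, γ.extend_zero, γ.extend_one, rfl⟩ hmax

end MountainPass

/-- Mountain-pass level separation: if `E : X → ℝ` is continuous, `E u₁ ≤ E u₀`, and the
mountain-pass level `c` (the infimum over continuous paths from `u₀` to `u₁` of the
supremum of `E` along the path) satisfies `c > E u₀`, then `u₀` and `u₁` lie in two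
distinct connected components of the sublevel set `{u : E u < c}`. -/
theorem stmt_3 {X : Type*} [NormedAddCommGroup X] [NormedSpace ℝ X]
    (E : X → ℝ) (hE : Continuous E) (u₀ u₁ : X) (h01 : E u₁ ≤ E u₀)
    (c : ℝ)
    (hc : c = sInf { y : ℝ | ∃ g : ℝ → X, ContinuousOn g (Set.Icc 0 1) ∧
        g 0 = u₀ ∧ g 1 = u₁ ∧ y = sSup ((fun t => E (g t)) '' Set.Icc 0 1) })
    (hgt : E u₀ < c) :
    u₀ ∈ {u : X | E u < c} ∧ u₁ ∈ {u : X | E u < c} ∧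
      connectedComponentIn {u : X | E u < c} u₀ ≠
        connectedComponentIn {u : X | E u < c} u₁ := by
  have hu₀ : E u₀ < c := hgt
  have hu₁ : E u₁ < c := h01.trans_lt hgt
  refine ⟨hu₀, hu₁, fun hcomp => ?_⟩
  have hjoined : JoinedIn {u | E u < c} u₀ u₁ :=
    (isOpen_lt hE continuous_const).joinedIn_of_connectedComponentIn_eq hu₀ hu₁ hcomp
  have hlt : sInf (pathMaxima E u₀ u₁) < c := sInf_pathMaxima_lt_of_joinedIn hE hjoined
  exact hlt.ne hc.symm
end

section
/- Let s ∈ (0,1), let n be an integer with n > 2s, and let 2*_s = 2n/(n-2s). Let v_k : ℝⁿ → [0,∞) be a sequence of nonnegative measurable functions with ∫_{ℝⁿ} v_k^{2*_s} dx < ∞, converging almost everywhere to a function v ∈ L^{2*_s}(ℝⁿ). Assume (i) for every continuous compactly supported φ : ℝⁿ → ℝ, ∫_{ℝⁿ} v_k^{2*_s} φ dx → ∫_{ℝⁿ} v^{2*_s} φ dx as k → ∞, and (ii) for every η > 0 there exists ρ > 0 such that ∫_{ℝⁿ ∖ B_ρ} v_k^{2*_s} dx < η for all k, where B_ρ is the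 ball of radius ρ centered at the origin. Then ∫_{ℝⁿ} |v_k - v|^{2*_s} dx → 0 as k → ∞. -/
open MeasureTheory Filter

open scoped Topology

/-!
Tightness keeps all but `η` of the mass of `v_k^p` inside a fixed ball; testing the weak
convergence against a continuous cutoff equal to `1` on that ball gives
`limsup ∫ v_k^p ≤ ∫ v^p`, and Fatou gives the reverse inequality, so `∫ v_k^p → ∫ v^p`.
Fatou's lemma applied to `v_k^p + v^p - |v_k - v|^p ≥ 0`, which tends to `2 v^p` a.e.,
then yields `limsup ∫ |v_k - v|^p ≤ 0`.
-/

theorem Real.abs_sub_rpow_le_rpow_add_rpow {a b p : ℝ} (ha : 0 ≤ a) (hb : 0 ≤ b) (hp : 0 ≤ p) :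
    |a - b| ^ p ≤ a ^ p + b ^ p := by
  have hab : |a - b| ≤ max a b :=
    abs_sub_le_iff.2 ⟨by linarith [le_max_left a b], by linarith [le_max_right a b]⟩
  calc |a - b| ^ p ≤ max a b ^ p := Real.rpow_le_rpow (abs_nonneg _) hab hp
    _ ≤ a ^ p + b ^ p := by
      rcases le_total a b with h | h
      · rw [max_eq_right h]; exact le_add_of_nonneg_left (Real.rpow_nonneg ha p)
      · rw [max_eq_left h]; exact le_add_of_nonneg_right (Real.rpow_nonneg hb p)

namespace MeasureTheory

section

variable {α : Type*} [MeasurableSpace α] {μ : Measure α} {f : ℕ → α → ℝ} {g : α → ℝ}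

theorem ae_nonneg_of_tendsto_ae (hf0 : ∀ k, 0 ≤ᵐ[μ] f k)
    (hfg : ∀ᵐ x ∂μ, Tendsto (fun k => f k x) atTop (𝓝 (g x))) : 0 ≤ᵐ[μ] g := by
  filter_upwards [hfg, ae_all_iff.2 hf0] with x hx hx0
  exact ge_of_tendsto' hx hx0

theorem eventually_lt_integral_of_tendsto_ae (hf0 : ∀ k, 0 ≤ᵐ[μ] f k)
    (hf : ∀ k, Integrable (f k) μ) (hfg : ∀ᵐ x ∂μ, Tendsto (fun k => f k x) atTop (𝓝 (g x)))
    {c : ℝ} (hc : c < ∫ x, g x ∂μ) : ∀ᶠ k in atTop, c < ∫ x, f k x ∂μ := by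
  rcases lt_or_ge c 0 with hc0 | hc0
  · exact Eventually.of_forall fun k => hc0.trans_le (integral_nonneg_of_ae (hf0 k))
  have hg : Integrable g μ := by
    by_contra h
    rw [integral_undef h] at hc
    linarith
  have hfatou : ENNReal.ofReal (∫ x, g x ∂μ) ≤
      liminf (fun k => ENNReal.ofReal (∫ x, f k x ∂μ)) atTop := by
    simp only [ofReal_integral_eq_lintegral_ofReal (hf _) (hf0 _),
      ofReal_integral_eq_lintegral_ofReal hg (ae_nonneg_of_tendsto_ae hf0 hfg)]
    calc ∫⁻ x, ENNReal.ofReal (g x) ∂μ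
        = ∫⁻ x, liminf (fun k => ENNReal.ofReal (f k x)) atTop ∂μ :=
          lintegral_congr_ae <| hfg.mono fun x hx =>
            ((ENNReal.continuous_ofReal.tendsto _).comp hx).liminf_eq.symm
      _ ≤ _ := lintegral_liminf_le' fun k => (hf k).1.aemeasurable.ennreal_ofReal
  have hlt : ENNReal.ofReal c < ENNReal.ofReal (∫ x, g x ∂μ) :=
    ENNReal.ofReal_lt_ofReal_iff'.2 ⟨hc, hc0.trans_lt hc⟩
  filter_upwards [eventually_lt_of_lt_liminf (hlt.trans_le hfatou)] with k hk
  exact (ENNReal.ofReal_lt_ofReal_iff'.1 hk).1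

theorem tendsto_integral_abs_sub_rpow_of_tendsto_integral_rpow {p : ℝ} (hp : 0 < p)
    (hf0 : ∀ k, 0 ≤ᵐ[μ] f k) (hf : ∀ k, AEStronglyMeasurable (f k) μ)
    (hfp : ∀ k, Integrable (fun x => f k x ^ p) μ) (hgp : Integrable (fun x => g x ^ p) μ)
    (hfg : ∀ᵐ x ∂μ, Tendsto (fun k => f k x) atTop (𝓝 (g x)))
    (hmass : Tendsto (fun k => ∫ x, f k x ^ p ∂μ) atTop (𝓝 (∫ x, g x ^ p ∂μ))) :
    Tendsto (fun k => ∫ x, |f k x - g x| ^ p ∂μ) atTop (𝓝 0) := by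
  have hg0 := ae_nonneg_of_tendsto_ae hf0 hfg
  have hg : AEStronglyMeasurable g μ := aestronglyMeasurable_of_tendsto_ae _ hf hfg
  have hdom : ∀ k, ∀ᵐ x ∂μ, |f k x - g x| ^ p ≤ f k x ^ p + g x ^ p := fun k => by
    filter_upwards [hf0 k, hg0] with x hfx hgx
    exact Real.abs_sub_rpow_le_rpow_add_rpow hfx hgx hp.le
  have hint : ∀ k, Integrable (fun x => |f k x - g x| ^ p) μ := fun k =>
    ((hfp k).add hgp).mono' ((Real.continuous_rpow_const hp.le).comp_aestronglyMeasurable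
      ((hf k).sub hg).norm) <| (hdom k).mono fun x hx => by
        rwa [Real.norm_of_nonneg (Real.rpow_nonneg (abs_nonneg _) p)]
  have hfatou : ∀ c < 2 * ∫ x, g x ^ p ∂μ, ∀ᶠ k in atTop,
      c < ∫ x, f k x ^ p + g x ^ p - |f k x - g x| ^ p ∂μ := by
    intro c hc
    refine eventually_lt_integral_of_tendsto_ae (g := fun x => 2 * g x ^ p)
      (fun k => (hdom k).mono fun x hx => sub_nonneg.2 hx)
      (fun k => ((hfp k).add hgp).sub (hint k)) ?_ (by rwa [integral_const_mul])
    filter_upwards [hfg] with x hx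
    have hpow := Real.continuous_rpow_const hp.le
    have hdiff : Tendsto (fun k => |f k x - g x| ^ p) atTop (𝓝 (|g x - g x| ^ p)) :=
      (hpow.tendsto _).comp (hx.sub tendsto_const_nhds).abs
    rw [sub_self, abs_zero, Real.zero_rpow hp.ne'] at hdiff
    simpa [two_mul] using (((hpow.tendsto _).comp hx).add tendsto_const_nhds).sub hdiff
  refine tendsto_order.2 ⟨fun c hc => Eventually.of_forall fun k =>
    hc.trans_le (integral_nonneg fun x => Real.rpow_nonneg (abs_nonneg _) p), fun ε hε => ?_⟩
  filter_upwards [hfatou (2 * ∫ x, g x ^ p ∂μ - ε / 2) (by linarith),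
    hmass.eventually (gt_mem_nhds (by linarith : _ < (∫ x, g x ^ p ∂μ) + ε / 2))]
    with k hk hk'
  rw [integral_sub (f := fun x => f k x ^ p + g x ^ p) ((hfp k).add hgp) (hint k),
    integral_add (hfp k) hgp] at hk
  linarith

theorem integral_le_integral_mul_add_setIntegral_compl {u φ : α → ℝ} {s : Set α}
    (hs : MeasurableSet s) (hu0 : 0 ≤ᵐ[μ] u) (hu : Integrable u μ)
    (huφ : Integrable (fun x => u x * φ x) μ) (hφ0 : ∀ x, 0 ≤ φ x) (hφ1 : Set.EqOn φ 1 s) :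
    ∫ x, u x ∂μ ≤ ∫ x, u x * φ x ∂μ + ∫ x in sᶜ, u x ∂μ := by
  rw [← integral_indicator hs.compl, ← integral_add huφ (hu.indicator hs.compl)]
  refine integral_mono_ae hu (huφ.add (hu.indicator hs.compl)) ?_
  filter_upwards [hu0] with x hx
  by_cases hxs : x ∈ s
  · simp [hφ1 hxs, hxs]
  · simpa [hxs] using mul_nonneg hx (hφ0 x)

end

section

variable {X : Type*} [MetricSpace X] [ProperSpace X] [MeasurableSpace X] [BorelSpace X]
  {μ : Measure X} {f : ℕ → X → ℝ} {g : X → ℝ}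

theorem eventually_integral_lt_of_tight (x₀ : X) (hf0 : ∀ k, 0 ≤ᵐ[μ] f k)
    (hg0 : 0 ≤ᵐ[μ] g) (hf : ∀ k, Integrable (f k) μ) (hg : Integrable g μ)
    (hweak : ∀ φ : X → ℝ, Continuous φ → HasCompactSupport φ →
      Tendsto (fun k => ∫ x, f k x * φ x ∂μ) atTop (𝓝 (∫ x, g x * φ x ∂μ)))
    (htight : ∀ η : ℝ, 0 < η → ∃ ρ : ℝ, ∀ k, ∫ x in (Metric.ball x₀ ρ)ᶜ, f k x ∂μ < η)
    {c : ℝ} (hc : ∫ x, g x ∂μ < c) : ∀ᶠ k in atTop, ∫ x, f k x ∂μ < c := by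
  set ε := c - ∫ x, g x ∂μ
  obtain ⟨ρ, hρ⟩ := htight (ε / 2) (by simp only [ε]; linarith)
  obtain ⟨φ, hφ1, -, hφc, hφ01⟩ := exists_continuous_one_zero_of_isCompact
    (isCompact_closedBall x₀ ρ) isClosed_empty (Set.disjoint_empty _)
  have hφ_norm : ∀ᵐ x ∂μ, ‖φ x‖ ≤ 1 := ae_of_all _ fun x => by
    rw [Real.norm_of_nonneg (hφ01 x).1]; exact (hφ01 x).2
  have hgφ : ∫ x, g x * φ x ∂μ ≤ ∫ x, g x ∂μ := by
    refine integral_mono_ae (hg.mul_bdd φ.continuous.aestronglyMeasurable hφ_norm) hg ?_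
    filter_upwards [hg0] with x hx
    exact mul_le_of_le_one_right hx (hφ01 x).2
  filter_upwards [(hweak φ φ.continuous hφc).eventually
    (gt_mem_nhds (by linarith : _ < (∫ x, g x * φ x ∂μ) + ε / 2))] with k hk
  have hsplit := integral_le_integral_mul_add_setIntegral_compl measurableSet_ball
    (hf0 k) (hf k) ((hf k).mul_bdd φ.continuous.aestronglyMeasurable hφ_norm) (fun x => (hφ01 x).1)
    (hφ1.mono Metric.ball_subset_closedBall)
  linarith [hρ k]

theorem tendsto_integral_of_tight (x₀ : X) (hf0 : ∀ k, 0 ≤ᵐ[μ] f k)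
    (hf : ∀ k, Integrable (f k) μ) (hg : Integrable g μ)
    (hfg : ∀ᵐ x ∂μ, Tendsto (fun k => f k x) atTop (𝓝 (g x)))
    (hweak : ∀ φ : X → ℝ, Continuous φ → HasCompactSupport φ →
      Tendsto (fun k => ∫ x, f k x * φ x ∂μ) atTop (𝓝 (∫ x, g x * φ x ∂μ)))
    (htight : ∀ η : ℝ, 0 < η → ∃ ρ : ℝ, ∀ k, ∫ x in (Metric.ball x₀ ρ)ᶜ, f k x ∂μ < η) :
    Tendsto (fun k => ∫ x, f k x ∂μ) atTop (𝓝 (∫ x, g x ∂μ)) :=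
  tendsto_order.2 ⟨fun _ hc => eventually_lt_integral_of_tendsto_ae hf0 hf hfg hc,
    fun _ hc => eventually_integral_lt_of_tight x₀ hf0 (ae_nonneg_of_tendsto_ae hf0 hfg) hf hg
      hweak htight hc⟩

end

end MeasureTheory

theorem stmt_10_general (s : ℝ) (hs : s ∈ Set.Ioo (0 : ℝ) 1) (n : ℕ) (hn : 2 * s < (n : ℝ))
    (v : ℕ → EuclideanSpace ℝ (Fin n) → ℝ) (w : EuclideanSpace ℝ (Fin n) → ℝ)
    (hv0 : ∀ k x, 0 ≤ v k x)
    (hvmeas : ∀ k, Measurable (v k))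
    (hvint : ∀ k, Integrable
      (fun x => v k x ^ (2 * (n : ℝ) / ((n : ℝ) - 2 * s))) volume)
    (hwint : Integrable
      (fun x => |w x| ^ (2 * (n : ℝ) / ((n : ℝ) - 2 * s))) volume)
    (hae : ∀ᵐ x : EuclideanSpace ℝ (Fin n) ∂volume,
      Tendsto (fun k => v k x) atTop (nhds (w x)))
    (hweak : ∀ φ : EuclideanSpace ℝ (Fin n) → ℝ, Continuous φ → HasCompactSupport φ →
      Tendsto (fun k => ∫ x, v k x ^ (2 * (n : ℝ) / ((n : ℝ) - 2 * s)) * φ x) atTop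
        (nhds (∫ x, w x ^ (2 * (n : ℝ) / ((n : ℝ) - 2 * s)) * φ x)))
    (htight : ∀ η : ℝ, 0 < η → ∃ ρ : ℝ, 0 < ρ ∧ ∀ k,
      (∫ x in (Metric.ball (0 : EuclideanSpace ℝ (Fin n)) ρ)ᶜ,
        v k x ^ (2 * (n : ℝ) / ((n : ℝ) - 2 * s))) < η) :
    Tendsto (fun k => ∫ x, |v k x - w x| ^ (2 * (n : ℝ) / ((n : ℝ) - 2 * s)))
      atTop (nhds 0) := by
  set p : ℝ := 2 * (n : ℝ) / ((n : ℝ) - 2 * s)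
  have hp : 0 < p := div_pos (by linarith [hs.1]) (by linarith)
  have hv0' : ∀ k, 0 ≤ᵐ[volume] v k := fun k => ae_of_all _ (hv0 k)
  have hwp : Integrable (fun x => w x ^ p) volume :=
    hwint.congr <| (ae_nonneg_of_tendsto_ae hv0' hae).mono fun x hx => by
      simp only [abs_of_nonneg hx]
  have hpow : ∀ᵐ x ∂volume, Tendsto (fun k => v k x ^ p) atTop (𝓝 (w x ^ p)) :=
    hae.mono fun x hx => ((Real.continuous_rpow_const hp.le).tendsto _).comp hx
  have hmass := tendsto_integral_of_tight 0
    (fun k => ae_of_all _ fun x => Real.rpow_nonneg (hv0 k x) p) hvint hwp hpow hweak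
    fun η hη => (htight η hη).imp fun _ => And.right
  exact tendsto_integral_abs_sub_rpow_of_tendsto_integral_rpow hp hv0'
    (fun k => (hvmeas k).aestronglyMeasurable) hvint hwp hae hmass

/-- Brezis–Lieb type convergence: if `v_k ≥ 0`, `∫ v_k^{2*_s} < ∞`, `v_k → v` a.e. with
`v ∈ L^{2*_s}`, the measures `v_k^{2*_s} dx` converge to `v^{2*_s} dx` against every
continuous compactly supported test function, and the family `v_k^{2*_s}` is tight,
then `v_k → v` in `L^{2*_s}(ℝⁿ)`, i.e. `∫ |v_k - v|^{2*_s} → 0`. -/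
theorem stmt_10 (s : ℝ) (hs : s ∈ Set.Ioo (0 : ℝ) 1) (n : ℕ) (hn : 2 * s < (n : ℝ))
    (v : ℕ → EuclideanSpace ℝ (Fin n) → ℝ) (w : EuclideanSpace ℝ (Fin n) → ℝ)
    (hv0 : ∀ k x, 0 ≤ v k x)
    (hvmeas : ∀ k, Measurable (v k)) (hwmeas : Measurable w)
    (hvint : ∀ k, Integrable
      (fun x => v k x ^ (2 * (n : ℝ) / ((n : ℝ) - 2 * s))) volume)
    (hwint : Integrable
      (fun x => |w x| ^ (2 * (n : ℝ) / ((n : ℝ) - 2 * s))) volume)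
    (hae : ∀ᵐ x : EuclideanSpace ℝ (Fin n) ∂volume,
      Tendsto (fun k => v k x) atTop (nhds (w x)))
    (hweak : ∀ φ : EuclideanSpace ℝ (Fin n) → ℝ, Continuous φ → HasCompactSupport φ →
      Tendsto (fun k => ∫ x, v k x ^ (2 * (n : ℝ) / ((n : ℝ) - 2 * s)) * φ x) atTop
        (nhds (∫ x, w x ^ (2 * (n : ℝ) / ((n : ℝ) - 2 * s)) * φ x)))
    (htight : ∀ η : ℝ, 0 < η → ∃ ρ : ℝ, 0 < ρ ∧ ∀ k,
      (∫ x in (Metric.ball (0 : EuclideanSpace ℝ (Fin n)) ρ)ᶜ,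
        v k x ^ (2 * (n : ℝ) / ((n : ℝ) - 2 * s))) < η) :
    Tendsto (fun k => ∫ x, |v k x - w x| ^ (2 * (n : ℝ) / ((n : ℝ) - 2 * s)))
      atTop (nhds 0) :=
  stmt_10_general s hs n hn v w hv0 hvmeas hvint hwint hae hweak htight
end

section
/- For every real m > 0 and every δ > 0 there exists M_δ > 0 such that for all real numbers α, β ≥ 0, (α+β)^{m+1} - α^{m+1} - (m+1)·α^m·β - β·((α+β)^m - α^m) ≤ δ·β^{m+1} + M_δ·α^{m+1}. -/
/-- For every `m > 0` and `δ > 0` there exists `M_δ > 0` such that for all `α, β ≥ 0`,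
`(α+β)^(m+1) - α^(m+1) - (m+1) α^m β - β ((α+β)^m - α^m) ≤ δ β^(m+1) + M_δ α^(m+1)`. -/
theorem stmt_11 (m : ℝ) (hm : 0 < m) (δ : ℝ) (hδ : 0 < δ) :
    ∃ M : ℝ, 0 < M ∧ ∀ α β : ℝ, 0 ≤ α → 0 ≤ β →
      (α + β) ^ (m + 1) - α ^ (m + 1) - (m + 1) * α ^ m * β -
          β * ((α + β) ^ m - α ^ m) ≤
        δ * β ^ (m + 1) + M * α ^ (m + 1) := by
  set ε : ℝ := min 1 (δ / 2 ^ m) with hεdef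
  have h2m : (0:ℝ) < 2 ^ m := Real.rpow_pos_of_pos two_pos m
  have hε : 0 < ε := lt_min one_pos (div_pos hδ h2m)
  have hε1 : ε ≤ 1 := min_le_left _ _
  have hεδ : ε * 2 ^ m ≤ δ := by
    have := min_le_right 1 (δ / 2 ^ m)
    calc ε * 2 ^ m ≤ (δ / 2 ^ m) * 2 ^ m := by nlinarith
      _ = δ := by field_simp
  refine ⟨(2 / ε) ^ m, Real.rpow_pos_of_pos (by positivity) m, ?_⟩
  intro α β hα hβ
  rcases eq_or_lt_of_le hα with h0 | hαpos
  · -- α = 0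
    subst h0
    have hz : (0:ℝ) ^ m = 0 := Real.zero_rpow hm.ne'
    have hz1 : (0:ℝ) ^ (m+1) = 0 := Real.zero_rpow (by positivity)
    rcases eq_or_lt_of_le hβ with h0b | hβpos
    · subst h0b
      simp [hz, hz1]
    · have hb : β ^ (m+1) = β ^ m * β := Real.rpow_add_one hβpos.ne' m
      rw [zero_add, hz, hz1, hb]
      have : 0 ≤ δ * (β ^ m * β) + (2/ε) ^ m * 0 := by positivity
      nlinarith
  · -- α > 0
    have hab : 0 < α + β := by linarith
    have key : (α + β) ^ (m + 1) - α ^ (m + 1) - (m + 1) * α ^ m * β -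
          β * ((α + β) ^ m - α ^ m) = α * (α + β) ^ m - α ^ (m+1) - m * α ^ m * β := by
      rw [Real.rpow_add_one hab.ne' m]; ring
    rw [key]
    have hle : α * (α + β) ^ m - α ^ (m+1) - m * α ^ m * β ≤ α * (α + β) ^ m := by
      have h1 : 0 ≤ α ^ (m+1) := Real.rpow_nonneg hα _
      have h2 : 0 ≤ α ^ m := Real.rpow_nonneg hα _
      nlinarith [mul_nonneg (mul_nonneg hm.le h2) hβ]
    have ha1 : α ^ (m+1) = α ^ m * α := Real.rpow_add_one hαpos.ne' m
    rcases le_or_gt α (ε * β) with hc | hc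
    · -- small α : bound by δ β^{m+1}
      have hβpos : 0 < β := by nlinarith
      have hab2 : α + β ≤ 2 * β := by nlinarith
      have hm1 : (α + β) ^ m ≤ (2 * β) ^ m :=
        Real.rpow_le_rpow hab.le hab2 hm.le
      have h2b : (2 * β) ^ m = 2 ^ m * β ^ m := Real.mul_rpow (by norm_num) hβ
      have hb1 : β ^ (m+1) = β ^ m * β := Real.rpow_add_one hβpos.ne' m
      have hβm : 0 ≤ β ^ m := Real.rpow_nonneg hβ _
      have hαm1 : 0 ≤ (2/ε) ^ m * α ^ (m+1) := by
        have := Real.rpow_nonneg hα (m+1)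
        have := Real.rpow_nonneg (show (0:ℝ) ≤ 2/ε by positivity) m
        nlinarith
      have : α * (α + β) ^ m ≤ δ * β ^ (m+1) := by
        calc α * (α + β) ^ m ≤ (ε * β) * (2 ^ m * β ^ m) := by
              rw [← h2b]; exact mul_le_mul hc hm1 (Real.rpow_nonneg hab.le m) (by nlinarith)
          _ = (ε * 2 ^ m) * (β ^ m * β) := by ring
          _ ≤ δ * (β ^ m * β) :=
              mul_le_mul_of_nonneg_right hεδ (mul_nonneg hβm hβ)
          _ = δ * β ^ (m+1) := by rw [hb1]
      linarith
    · -- large α : bound by M α^{m+1}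
      have hβa : β ≤ α / ε := by
        rw [le_div_iff₀ hε]; nlinarith
      have hab2 : α + β ≤ (2/ε) * α := by
        have h1 : 1 ≤ 1/ε := (one_le_div hε).2 hε1
        have : α + β ≤ α + α / ε := by linarith
        calc α + β ≤ α + α / ε := this
          _ = (1 + 1/ε) * α := by ring
          _ ≤ (2/ε) * α := by
              have h2e : (2:ℝ)/ε = 1/ε + 1/ε := by ring
              nlinarith
      have hm1 : (α + β) ^ m ≤ ((2/ε) * α) ^ m :=
        Real.rpow_le_rpow hab.le hab2 hm.le
      have h2b : ((2/ε) * α) ^ m = (2/ε) ^ m * α ^ m :=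
        Real.mul_rpow (by positivity) hα
      have hβm1 : 0 ≤ δ * β ^ (m+1) := by
        have := Real.rpow_nonneg hβ (m+1); nlinarith
      have : α * (α + β) ^ m ≤ (2/ε) ^ m * α ^ (m+1) := by
        rw [ha1]
        calc α * (α + β) ^ m ≤ α * ((2/ε) ^ m * α ^ m) := by
              rw [← h2b]; exact mul_le_mul_of_nonneg_left hm1 hα
          _ = (2/ε) ^ m * (α ^ m * α) := by ring
      linarith
end
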